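/- There is no small set S of group homomorphisms such that the class of groups co-orthogonal to every morphism in S consists exactly of the trivial groups. -/

import Mathlib

/-!
A simple group `X` admits only the trivial homomorphism into a group of smaller cardinality
(its kernel cannot be trivial), so `X` is co-orthogonal to every morphism between groups smaller
than `X`. The members of a small set of morphisms have bounded cardinality, and simple groups
of arbitrarily large cardinality exist: `PSL(2, F)` is simple for every infinite field `F` and
contains a copy of `F` via transvections, while `Frac ℚ[X_ω | ω ∈ Ω]` is as large as we like.
-/

open CategoryTheory

universe u v w

open Cardinal Matrix MatrixGroups

theorem MonoidHom.eq_one_of_isSimpleGroup_of_mk_lt {G H : Type u} [Group G] [IsSimpleGroup G]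
    [Group H] (hHG : #H < #G) (φ : G →* H) : φ = 1 := by
  refine MonoidHom.ker_eq_top_iff.mp (φ.normal_ker.eq_bot_or_eq_top.resolve_left fun hbot => ?_)
  exact hHG.not_ge (mk_le_of_injective (φ.ker_eq_bot_iff.mp hbot))

theorem GrpCat.bijective_comp_of_isSimpleGroup {X A B : GrpCat.{u}} [IsSimpleGroup X]
    (hA : #A < #X) (hB : #B < #X) (f : A ⟶ B) :
    Function.Bijective (fun g : X ⟶ A => g ≫ f) := by
  have hom_eq {Y : GrpCat.{u}} (hY : #Y < #X) (g h : X ⟶ Y) : g = h :=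
    GrpCat.hom_ext <| (g.hom.eq_one_of_isSimpleGroup_of_mk_lt hY).trans
      (h.hom.eq_one_of_isSimpleGroup_of_mk_lt hY).symm
  exact ⟨fun g h _ => hom_eq hA g h, fun h => ⟨GrpCat.ofHom 1, hom_eq hB _ _⟩⟩

theorem Matrix.ProjectiveSpecialLinearGroup.lift_mk_le_mk {ι : Type v} {F : Type w}
    [DecidableEq ι] [Fintype ι] [Nontrivial ι] [Field F] :
    lift.{v} #F ≤ #(ProjectiveSpecialLinearGroup ι F) := by
  obtain ⟨i, j, hij⟩ := exists_pair_ne ι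
  let t (b : F) : ProjectiveSpecialLinearGroup ι F := SpecialLinearGroup.transvection hij b
  have ht : Function.Injective t := fun b c hbc => by
    rw [QuotientGroup.eq, SpecialLinearGroup.transvection_inv,
      ← SpecialLinearGroup.transvection_add, SpecialLinearGroup.transvection_mem_center_iff]
      at hbc
    exact neg_add_eq_zero.mp hbc
  have := lift_mk_le_lift_mk_of_injective ht
  rwa [lift_id'.{w, v}, lift_umax.{w, v}] at this

theorem exists_ne_zero_and_sq_ne_one (F : Type*) [Field F] [Infinite F] :
    ∃ a : F, a ≠ 0 ∧ a ^ 2 ≠ 1 := by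
  classical
  obtain ⟨a, ha⟩ := Infinite.exists_notMem_finset ({0, 1, -1} : Finset F)
  simp only [Finset.mem_insert, Finset.mem_singleton, not_or] at ha
  exact ⟨a, ha.1, by rw [sq, Ne, mul_self_eq_one_iff]; tauto⟩

theorem exists_infinite_field_lt_mk (κ : Cardinal.{u}) :
    ∃ (F : Type u) (_ : Field F), Infinite F ∧ κ < #F := by
  let Ω := (Order.succ κ).out
  refine ⟨FractionRing (MvPolynomial Ω ℚ), inferInstance, inferInstance, ?_⟩
  calc κ < #Ω := by rw [mk_out]; exact Order.lt_succ κ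
    _ ≤ _ := mk_le_of_injective
      ((IsFractionRing.injective _ _).comp (MvPolynomial.X_injective (R := ℚ) (σ := Ω)))

theorem exists_isSimpleGroup_lt_mk (κ : Cardinal.{u}) :
    ∃ (G : Type u) (_ : Group G), IsSimpleGroup G ∧ κ < #G := by
  obtain ⟨F, _, _, hκF⟩ := exists_infinite_field_lt_mk κ
  refine ⟨PSL(2, F), inferInstance,
    ProjectiveSpecialLinearGroup.rank_two_simple' (exists_ne_zero_and_sq_ne_one F),
    hκF.trans_le ?_⟩
  simpa using ProjectiveSpecialLinearGroup.lift_mk_le_mk (ι := Fin 2) (F := F)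

/-- There is no small set `S` of group homomorphisms such that the class of
groups co-orthogonal to every morphism of `S` consists exactly of the trivial
groups. -/
theorem stmt6 :
    ¬ ∃ (ι : Type u) (A B : ι → GrpCat.{u}) (f : ∀ i, A i ⟶ B i),
        ∀ X : GrpCat.{u},
          (∀ i, Function.Bijective (fun g : X ⟶ A i => g ≫ f i)) ↔
            Subsingleton X := by
  rintro ⟨ι, A, B, f, hcoorth⟩
  obtain ⟨G, _, hG, hκG⟩ := exists_isSimpleGroup_lt_mk (Cardinal.sum fun i => #(A i) + #(B i))
  have : IsSimpleGroup (GrpCat.of G) := hG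
  have hbound (i : ι) : #(A i) + #(B i) < #G := (le_sum _ i).trans_lt hκG
  have : Subsingleton (GrpCat.of G) := (hcoorth (GrpCat.of G)).mp fun i =>
    GrpCat.bijective_comp_of_isSimpleGroup ((self_le_add_right _ _).trans_lt (hbound i))
      ((self_le_add_left _ _).trans_lt (hbound i)) (f i)
  exact not_nontrivial G hG.toNontrivial
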